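/- Let g ∈ L²(Ω), let α₁, α₂ > 0, and define E(u,α) := ‖u − g‖_{L²(Ω)}² + α·TV(u). If u_{α_i} minimizes E(·,α_i) over {u ∈ L²(Ω) : TV(u) < ∞} for i = 1,2, then ‖u_{α₁} − u_{α₂}‖_{L²(Ω)} ≤ C·‖g − g_Ω‖_{L²(Ω)}, where C := min { 2|α₂ − α₁|/(α₂ + α₁), (|α₂ − α₁|/(α₂ + α₁))^{1/2} }. -/

import Mathlib

/-!
Both minimizers satisfy the variational inequality
`‖u - w‖² ≤ E_α(w) - E_α(u)` for every competitor `w`, which follows from the convexity of `TV`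
and the strong convexity of `‖· - g‖²`. Testing the inequality for `u_{α₁}` with `w = u_{α₂}` and
vice versa and combining with weights `α₂`, `α₁` eliminates the total variations:
`(α₁ + α₂)‖u_{α₁} - u_{α₂}‖² ≤ (α₂ - α₁)(‖u_{α₂} - g‖² - ‖u_{α₁} - g‖²)`.
Since the constant `g_Ω` has zero total variation, both `‖u_{αᵢ} - g‖` are at most
`D = ‖g - g_Ω‖`, so the last factor is bounded both by `D²` and by `2D‖u_{α₁} - u_{α₂}‖`; these
give the two constants of the minimum.
-/

open MeasureTheory Filter
open scoped ENNReal NNReal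

noncomputable section

abbrev E2 : Type := EuclideanSpace ℝ (Fin 2)

abbrev μΩ (Ω : Set E2) : Measure E2 := MeasureTheory.volume.restrict Ω

abbrev LpΩ (Ω : Set E2) := Lp ℝ 2 (μΩ Ω)

/-- Discrete divergence of a C¹ vector field. -/
def divg (ξ : E2 → E2) (x : E2) : ℝ :=
  ∑ i : Fin 2, fderiv ℝ ξ x (EuclideanSpace.single i 1) i

/-- Admissible test vector fields for the total variation. -/
def IsTestField (Ω : Set E2) (ξ : E2 → E2) : Prop :=
  ContDiff ℝ 1 ξ ∧ HasCompactSupport ξ ∧ tsupport ξ ⊆ Ω ∧ ∀ x, ‖ξ x‖ ≤ 1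

/-- Total variation of `u ∈ L²(Ω)` (valued in `ℝ≥0∞`). -/
def TV (Ω : Set E2) (u : LpΩ Ω) : ℝ≥0∞ :=
  ⨆ ξ : {ξ : E2 → E2 // IsTestField Ω ξ},
    ENNReal.ofReal (∫ x, u x * divg ξ.1 x ∂(μΩ Ω))

/-- Fidelity term `H_τ(u;g) = (1/τ)‖Tu - g‖_{L^τ}^τ`. -/
def Hfid (Ω : Set E2) (τ : ℕ) (T : LpΩ Ω →L[ℝ] LpΩ Ω) (g u : LpΩ Ω) : ℝ :=
  (1 / (τ : ℝ)) * ∫ x, |(T u - g : LpΩ Ω) x| ^ τ ∂(μΩ Ω)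

/-- The functional `J_τ(u,α) = H_τ(u;g) + α · TV(u)` (valued in `ℝ≥0∞`). -/
def Jfun (Ω : Set E2) (τ : ℕ) (T : LpΩ Ω →L[ℝ] LpΩ Ω) (g : LpΩ Ω) (α : ℝ)
    (u : LpΩ Ω) : ℝ≥0∞ :=
  ENNReal.ofReal (Hfid Ω τ T g u) + ENNReal.ofReal α * TV Ω u

/-- The mean value `g_Ω` of `g` over `Ω`. -/
def meanG (Ω : Set E2) (g : LpΩ Ω) : ℝ :=
  (∫ x, g x ∂(μΩ Ω)) / (MeasureTheory.volume Ω).toReal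

/-- `‖g - g_Ω‖_{L^τ(Ω)}^τ`. -/
def gMeanDist (Ω : Set E2) (τ : ℕ) (g : LpΩ Ω) : ℝ :=
  ∫ x, |g x - meanG Ω g| ^ τ ∂(μΩ Ω)

/-- `B_τ = (ν_τ/τ)|Ω|`. -/
def Bval (Ω : Set E2) (τ : ℕ) (ν : ℝ) : ℝ :=
  (ν / (τ : ℝ)) * (MeasureTheory.volume Ω).toReal

/-- `o` represents the constant function `1_Ω` in `L²(Ω)`. -/
def IsOneFun (Ω : Set E2) (o : LpΩ Ω) : Prop :=
  ∀ᵐ x ∂(μΩ Ω), o x = 1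

/-- `u` minimizes `J_τ(·,α)` over `{TV < ∞}`. -/
def IsJMin (Ω : Set E2) (τ : ℕ) (T : LpΩ Ω →L[ℝ] LpΩ Ω) (g : LpΩ Ω) (α : ℝ)
    (u : LpΩ Ω) : Prop :=
  TV Ω u < ⊤ ∧ ∀ v, TV Ω v < ⊤ → Jfun Ω τ T g α u ≤ Jfun Ω τ T g α v

/-- The denoising energy `E(u,α) = ‖u-g‖²_{L²} + α·TV(u)` (valued in `ℝ≥0∞`). -/
def Efun (Ω : Set E2) (g : LpΩ Ω) (α : ℝ) (u : LpΩ Ω) : ℝ≥0∞ :=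
  ENNReal.ofReal (‖u - g‖ ^ 2) + ENNReal.ofReal α * TV Ω u

open Topology

lemma le_of_forall_one_sub_mul_le {x y : ℝ} (h : ∀ t : ℝ, 0 < t → t < 1 → (1 - t) * x ≤ y) :
    x ≤ y := by
  have hlim : Tendsto (fun t : ℝ => (1 - t) * x) (𝓝[>] 0) (𝓝 x) := by
    have : Tendsto (fun t : ℝ => (1 - t) * x) (𝓝 0) (𝓝 ((1 - 0) * x)) :=
      ((continuous_const.sub continuous_id).mul continuous_const).tendsto 0
    simpa using this.mono_left nhdsWithin_le_nhds
  refine le_of_tendsto hlim ?_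
  filter_upwards [Ioo_mem_nhdsGT (zero_lt_one' ℝ)] with t ht using h t ht.1 ht.2

lemma le_min_mul_of_mul_sq_le {a b D N δ : ℝ} (ha : 0 < a) (hb : 0 ≤ b) (hD : 0 ≤ D)
    (hN : 0 ≤ N) (h : a * N ^ 2 ≤ b * δ) (hδD : δ ≤ D ^ 2) (hδN : δ ≤ 2 * D * N) :
    N ≤ min (2 * b / a) (√(b / a)) * D := by
  rw [min_mul_of_nonneg _ _ hD]
  refine le_min ?_ ?_
  · rcases hN.eq_or_lt with rfl | hN
    · positivity
    · rw [div_mul_eq_mul_div, le_div_iff₀ ha]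
      nlinarith [mul_le_mul_of_nonneg_left hδN hb]
  · rw [← Real.sqrt_sq hN, ← Real.sqrt_sq hD, ← Real.sqrt_mul (by positivity)]
    refine Real.sqrt_le_sqrt ?_
    rw [div_mul_eq_mul_div, le_div_iff₀ ha]
    nlinarith [mul_le_mul_of_nonneg_left hδD hb]

section PenalizedLeastSquares

variable {V : Type*} [NormedAddCommGroup V] {R : V → ℝ≥0∞}

lemma abs_norm_sq_sub_norm_sq_le (a b : V) :
    |‖a‖ ^ 2 - ‖b‖ ^ 2| ≤ ‖a - b‖ * (‖a‖ + ‖b‖) := by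
  rw [sq_sub_sq, abs_mul, abs_of_nonneg (by positivity : 0 ≤ ‖a‖ + ‖b‖), mul_comm]
  exact mul_le_mul_of_nonneg_right (abs_norm_sub_norm_le a b) (by positivity)

def penalizedEnergy (R : V → ℝ≥0∞) (g : V) (α : ℝ) (u : V) : ℝ≥0∞ :=
  ENNReal.ofReal (‖u - g‖ ^ 2) + ENNReal.ofReal α * R u

lemma toReal_penalizedEnergy (g : V) {α : ℝ} (hα : 0 ≤ α) {u : V}
    (hu : R u < ⊤) :
    (penalizedEnergy R g α u).toReal = ‖u - g‖ ^ 2 + α * (R u).toReal := by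
  rw [penalizedEnergy, ENNReal.toReal_add ENNReal.ofReal_ne_top
    (ENNReal.mul_ne_top ENNReal.ofReal_ne_top hu.ne), ENNReal.toReal_mul,
    ENNReal.toReal_ofReal (by positivity), ENNReal.toReal_ofReal hα]

lemma norm_sub_le_of_isMin_of_eq_zero {g : V} {α : ℝ} (hα : 0 ≤ α) {u v₀ : V}
    (hu : R u < ⊤) (hmin : ∀ v, R v < ⊤ → penalizedEnergy R g α u ≤ penalizedEnergy R g α v)
    (hv₀ : R v₀ = 0) : ‖u - g‖ ≤ ‖v₀ - g‖ := by
  have hv₀_lt_top : R v₀ < ⊤ := hv₀ ▸ ENNReal.zero_lt_top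
  have := ENNReal.toReal_mono (by unfold penalizedEnergy; finiteness) (hmin v₀ hv₀_lt_top)
  rw [toReal_penalizedEnergy g hα hu, toReal_penalizedEnergy g hα hv₀_lt_top, hv₀,
    ENNReal.toReal_zero, mul_zero, add_zero] at this
  have : ‖u - g‖ ^ 2 ≤ ‖v₀ - g‖ ^ 2 := by
    nlinarith [mul_nonneg hα (ENNReal.toReal_nonneg (a := R u))]
  exact (sq_le_sq₀ (norm_nonneg _) (norm_nonneg _)).mp this

variable [InnerProductSpace ℝ V]

lemma norm_one_sub_smul_add_smul_sq (a b : V) (t : ℝ) :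
    ‖(1 - t) • a + t • b‖ ^ 2
      = (1 - t) * ‖a‖ ^ 2 + t * ‖b‖ ^ 2 - t * (1 - t) * ‖a - b‖ ^ 2 := by
  simp only [← real_inner_self_eq_norm_sq, inner_add_left, inner_add_right, inner_sub_left,
    inner_sub_right, real_inner_smul_left, real_inner_smul_right, real_inner_comm a b]
  ring

def IsConvexPenalty (R : V → ℝ≥0∞) : Prop :=
  ∀ u w : V, ∀ t : ℝ, 0 ≤ t → t ≤ 1 →
    R ((1 - t) • u + t • w) ≤ ENNReal.ofReal (1 - t) * R u + ENNReal.ofReal t * R w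

lemma IsConvexPenalty.lt_top (hR : IsConvexPenalty R) {u w : V} (hu : R u < ⊤)
    (hw : R w < ⊤) {t : ℝ} (ht₀ : 0 ≤ t) (ht₁ : t ≤ 1) : R ((1 - t) • u + t • w) < ⊤ :=
  (hR u w t ht₀ ht₁).trans_lt (by finiteness)

lemma IsConvexPenalty.toReal_le (hR : IsConvexPenalty R) {u w : V} (hu : R u < ⊤)
    (hw : R w < ⊤) {t : ℝ} (ht₀ : 0 ≤ t) (ht₁ : t ≤ 1) :
    (R ((1 - t) • u + t • w)).toReal ≤ (1 - t) * (R u).toReal + t * (R w).toReal := by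
  have := ENNReal.toReal_mono (by finiteness) (hR u w t ht₀ ht₁)
  rwa [ENNReal.toReal_add (by finiteness) (by finiteness), ENNReal.toReal_mul,
    ENNReal.toReal_mul, ENNReal.toReal_ofReal (by linarith), ENNReal.toReal_ofReal ht₀] at this

/-- Compare `u` with `(1 - t) • u + t • w` and let `t → 0`: the `‖u - w‖²` term is the gain from
the strong convexity of `‖· - g‖²`. -/
theorem IsConvexPenalty.norm_sub_sq_le_of_isMin (hR : IsConvexPenalty R) {g : V} {α : ℝ}
    (hα : 0 ≤ α) {u w : V} (hu : R u < ⊤)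
    (hmin : ∀ v, R v < ⊤ → penalizedEnergy R g α u ≤ penalizedEnergy R g α v) (hw : R w < ⊤) :
    ‖u - w‖ ^ 2 ≤ ‖w - g‖ ^ 2 - ‖u - g‖ ^ 2 + α * ((R w).toReal - (R u).toReal) := by
  refine le_of_forall_one_sub_mul_le fun t ht₀ ht₁ => ?_
  have hwt := hR.lt_top hu hw ht₀.le ht₁.le
  have hRwt := hR.toReal_le hu hw ht₀.le ht₁.le
  have henergy := ENNReal.toReal_mono (by unfold penalizedEnergy; finiteness) (hmin _ hwt)
  rw [toReal_penalizedEnergy g hα hu, toReal_penalizedEnergy g hα hwt,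
    show (1 - t) • u + t • w - g = (1 - t) • (u - g) + t • (w - g) by module,
    norm_one_sub_smul_add_smul_sq, sub_sub_sub_cancel_right] at henergy
  have : t * ((1 - t) * ‖u - w‖ ^ 2) ≤
      t * (‖w - g‖ ^ 2 - ‖u - g‖ ^ 2 + α * ((R w).toReal - (R u).toReal)) := by
    nlinarith [mul_le_mul_of_nonneg_left hRwt hα]
  exact le_of_mul_le_mul_left this ht₀

theorem IsConvexPenalty.norm_sub_le_of_isMin (hR : IsConvexPenalty R) {g v₀ : V}
    (hv₀ : R v₀ = 0) {α₁ α₂ : ℝ} (hα₁ : 0 < α₁) (hα₂ : 0 < α₂) {u₁ u₂ : V}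
    (hu₁ : R u₁ < ⊤ ∧ ∀ v, R v < ⊤ → penalizedEnergy R g α₁ u₁ ≤ penalizedEnergy R g α₁ v)
    (hu₂ : R u₂ < ⊤ ∧ ∀ v, R v < ⊤ → penalizedEnergy R g α₂ u₂ ≤ penalizedEnergy R g α₂ v) :
    ‖u₁ - u₂‖ ≤ min (2 * |α₂ - α₁| / (α₂ + α₁)) (√(|α₂ - α₁| / (α₂ + α₁))) * ‖g - v₀‖ := by
  obtain ⟨hRu₁, hmin₁⟩ := hu₁
  obtain ⟨hRu₂, hmin₂⟩ := hu₂
  have h₁ := hR.norm_sub_sq_le_of_isMin hα₁.le hRu₁ hmin₁ hRu₂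
  have h₂ := hR.norm_sub_sq_le_of_isMin hα₂.le hRu₂ hmin₂ hRu₁
  rw [norm_sub_rev u₂] at h₂
  have hd₁ := norm_sub_le_of_isMin_of_eq_zero hα₁.le hRu₁ hmin₁ hv₀
  have hd₂ := norm_sub_le_of_isMin_of_eq_zero hα₂.le hRu₂ hmin₂ hv₀
  rw [norm_sub_rev v₀] at hd₁ hd₂
  -- the penalty terms cancel in `α₂ h₁ + α₁ h₂`
  have hkey : (α₂ + α₁) * ‖u₁ - u₂‖ ^ 2 ≤ (α₂ - α₁) * (‖u₂ - g‖ ^ 2 - ‖u₁ - g‖ ^ 2) := by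
    nlinarith [mul_le_mul_of_nonneg_left h₁ hα₂.le, mul_le_mul_of_nonneg_left h₂ hα₁.le]
  refine le_min_mul_of_mul_sq_le (by positivity) (abs_nonneg _) (norm_nonneg _) (norm_nonneg _)
    (hkey.trans ((le_abs_self _).trans (abs_mul _ _).le)) ?_ ?_
  · exact abs_sub_le_of_nonneg_of_le (by positivity) (by gcongr) (by positivity) (by gcongr)
  · calc |‖u₂ - g‖ ^ 2 - ‖u₁ - g‖ ^ 2| ≤ ‖u₁ - u₂‖ * (‖u₂ - g‖ + ‖u₁ - g‖) := by
          simpa [norm_sub_rev u₂] using abs_norm_sq_sub_norm_sq_le (u₂ - g) (u₁ - g)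
      _ ≤ ‖u₁ - u₂‖ * (‖g - v₀‖ + ‖g - v₀‖) := by gcongr
      _ = 2 * ‖g - v₀‖ * ‖u₁ - u₂‖ := by ring

end PenalizedLeastSquares

theorem integral_fderiv_apply_eq_zero {E F : Type*} [NormedAddCommGroup E] [NormedSpace ℝ E]
    [FiniteDimensional ℝ E] [MeasurableSpace E] [BorelSpace E] {μ : Measure E}
    [μ.IsAddHaarMeasure] [NormedAddCommGroup F] [NormedSpace ℝ F] {f : E → F}
    (hf : ContDiff ℝ 1 f) (hfc : HasCompactSupport f) (v : E) :
    ∫ x, fderiv ℝ f x v ∂μ = 0 := by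
  have hf' : Continuous fun x => fderiv ℝ f x v :=
    (hf.continuous_fderiv one_ne_zero).clm_apply continuous_const
  have := integral_smul_fderiv_eq_neg_fderiv_smul_of_integrable (μ := μ) (v := v)
    (f := fun _ => (1 : ℝ)) (g := f) (by simp)
    (by simpa using hf'.integrable_of_hasCompactSupport (hfc.fderiv_apply ℝ v))
    (by simpa using hf.continuous.integrable_of_hasCompactSupport hfc)
    (fun _ _ => differentiableAt_const _) (fun x _ => hf.differentiable one_ne_zero x)
  simpa using this

section Divergence

variable {ξ : E2 → E2}

lemma tsupport_divg_subset (ξ : E2 → E2) : tsupport (divg ξ) ⊆ tsupport ξ :=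
  (tsupport_comp_subset (g := fun L : E2 →L[ℝ] E2 => ∑ i, L (EuclideanSpace.single i 1) i)
    (by simp) _).trans (tsupport_fderiv_subset ℝ)

lemma continuous_divg (hξ : ContDiff ℝ 1 ξ) : Continuous (divg ξ) := by
  have := hξ.continuous_fderiv one_ne_zero
  unfold divg
  fun_prop

lemma hasCompactSupport_divg (hξ : HasCompactSupport ξ) : HasCompactSupport (divg ξ) :=
  hξ.mono' (subset_tsupport _ |>.trans (tsupport_divg_subset ξ))

lemma integral_divg_eq_zero {Ω : Set E2} (hξ : IsTestField Ω ξ) : ∫ x, divg ξ x ∂(μΩ Ω) = 0 := by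
  obtain ⟨hξ₁, hξc, hξΩ, -⟩ := hξ
  rw [setIntegral_eq_integral_of_forall_compl_eq_zero fun x hx =>
    image_eq_zero_of_notMem_tsupport fun h => hx (hξΩ (tsupport_divg_subset ξ h))]
  have hint (v : E2) : Integrable (fun x => fderiv ℝ ξ x v) :=
    Continuous.integrable_of_hasCompactSupport
      ((hξ₁.continuous_fderiv one_ne_zero).clm_apply continuous_const) (hξc.fderiv_apply ℝ v)
  unfold divg
  rw [integral_finsetSum _ fun i _ => ?_]
  · refine Finset.sum_eq_zero fun i _ => ?_
    have := (EuclideanSpace.proj (𝕜 := ℝ) i).integral_comp_comm (hint (EuclideanSpace.single i 1))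
    rw [integral_fderiv_apply_eq_zero hξ₁ hξc, map_zero] at this
    exact this
  · exact (EuclideanSpace.proj (𝕜 := ℝ) i).integrable_comp (hint _)

end Divergence

section TotalVariation

variable {Ω : Set E2}

lemma integrable_mul_divg (u : LpΩ Ω) {ξ : E2 → E2} (hξ : IsTestField Ω ξ) :
    Integrable (fun x => u x * divg ξ x) (μΩ Ω) :=
  (Lp.memLp u).integrable_mul (q := 2)
    ((continuous_divg hξ.1).memLp_of_hasCompactSupport (hasCompactSupport_divg hξ.2.1))

lemma le_TV (u : LpΩ Ω) {ξ : E2 → E2} (hξ : IsTestField Ω ξ) :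
    ENNReal.ofReal (∫ x, u x * divg ξ x ∂(μΩ Ω)) ≤ TV Ω u :=
  le_iSup (fun ξ : {ξ : E2 → E2 // IsTestField Ω ξ} =>
    ENNReal.ofReal (∫ x, u x * divg ξ.1 x ∂(μΩ Ω))) ⟨ξ, hξ⟩

theorem isConvexPenalty_TV (Ω : Set E2) : IsConvexPenalty (TV Ω) := by
  intro u w t ht₀ ht₁
  refine iSup_le fun ⟨ξ, hξ⟩ => ?_
  have hlin : (fun x => ((1 - t) • u + t • w : LpΩ Ω) x * divg ξ x)
      =ᵐ[μΩ Ω] fun x => (1 - t) * (u x * divg ξ x) + t * (w x * divg ξ x) := by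
    filter_upwards [Lp.coeFn_add ((1 - t) • u) (t • w), Lp.coeFn_smul (1 - t) u,
      Lp.coeFn_smul t w] with x hadd hsmul₁ hsmul₂
    rw [hadd, Pi.add_apply, hsmul₁, hsmul₂, Pi.smul_apply, Pi.smul_apply, smul_eq_mul,
      smul_eq_mul]
    ring
  rw [integral_congr_ae hlin, integral_add ((integrable_mul_divg u hξ).const_mul _)
    ((integrable_mul_divg w hξ).const_mul _), integral_const_mul, integral_const_mul]
  refine ENNReal.ofReal_add_le.trans ?_
  rw [ENNReal.ofReal_mul (by linarith), ENNReal.ofReal_mul ht₀]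
  gcongr
  exacts [le_TV u hξ, le_TV w hξ]

lemma TV_eq_zero_of_ae_eq_const {u : LpΩ Ω} {c : ℝ} (hu : ∀ᵐ x ∂(μΩ Ω), u x = c) :
    TV Ω u = 0 := by
  refine ENNReal.iSup_eq_zero.2 fun ⟨ξ, hξ⟩ => ?_
  have : (fun x => u x * divg ξ x) =ᵐ[μΩ Ω] fun x => c * divg ξ x := by
    filter_upwards [hu] with x hx
    rw [hx]
  rw [integral_congr_ae this, integral_const_mul, integral_divg_eq_zero hξ, mul_zero,
    ENNReal.ofReal_zero]

lemma norm_sub_Lp_const [IsFiniteMeasure (μΩ Ω)] (g : LpΩ Ω) (c : ℝ) :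
    ‖g - Lp.const 2 (μΩ Ω) c‖ = √(∫ x, (g x - c) ^ 2 ∂(μΩ Ω)) := by
  rw [← Real.sqrt_sq (norm_nonneg _), ← real_inner_self_eq_norm_sq, L2.inner_def]
  congr 1
  refine integral_congr_ae ?_
  filter_upwards [Lp.coeFn_sub g (Lp.const 2 (μΩ Ω) c), Lp.coeFn_const 2 (μΩ Ω) c]
    with x hsub hconst
  rw [hsub, Pi.sub_apply, hconst, Function.const_apply, real_inner_self_eq_norm_sq,
    Real.norm_eq_abs, sq_abs]

end TotalVariation

theorem stmt5_general (Ω : Set E2) (hΩb : Bornology.IsBounded Ω)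
    (g : LpΩ Ω) (α₁ α₂ : ℝ) (hα₁ : 0 < α₁) (hα₂ : 0 < α₂)
    (u₁ u₂ : LpΩ Ω)
    (hu₁ : TV Ω u₁ < ⊤ ∧ ∀ v, TV Ω v < ⊤ → Efun Ω g α₁ u₁ ≤ Efun Ω g α₁ v)
    (hu₂ : TV Ω u₂ < ⊤ ∧ ∀ v, TV Ω v < ⊤ → Efun Ω g α₂ u₂ ≤ Efun Ω g α₂ v) :
    ‖u₁ - u₂‖ ≤
      min (2 * |α₂ - α₁| / (α₂ + α₁)) (Real.sqrt (|α₂ - α₁| / (α₂ + α₁))) *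
        Real.sqrt (∫ x, (g x - meanG Ω g) ^ 2 ∂(μΩ Ω)) := by
  have : IsFiniteMeasure (μΩ Ω) := ⟨by simpa using hΩb.measure_lt_top⟩
  rw [← norm_sub_Lp_const]
  exact (isConvexPenalty_TV Ω).norm_sub_le_of_isMin
    (TV_eq_zero_of_ae_eq_const (Lp.coeFn_const 2 (μΩ Ω) (meanG Ω g))) hα₁ hα₂ hu₁ hu₂

/-- `‖u_{α₁} - u_{α₂}‖_{L²} ≤ C‖g - g_Ω‖_{L²}` with
`C = min{2|α₂-α₁|/(α₂+α₁), (|α₂-α₁|/(α₂+α₁))^{1/2}}`. -/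
theorem stmt5 (Ω : Set E2) (hΩo : IsOpen Ω) (hΩb : Bornology.IsBounded Ω)
    (hΩpos : 0 < MeasureTheory.volume Ω)
    (g : LpΩ Ω) (α₁ α₂ : ℝ) (hα₁ : 0 < α₁) (hα₂ : 0 < α₂)
    (u₁ u₂ : LpΩ Ω)
    (hu₁ : TV Ω u₁ < ⊤ ∧ ∀ v, TV Ω v < ⊤ → Efun Ω g α₁ u₁ ≤ Efun Ω g α₁ v)
    (hu₂ : TV Ω u₂ < ⊤ ∧ ∀ v, TV Ω v < ⊤ → Efun Ω g α₂ u₂ ≤ Efun Ω g α₂ v) :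
    ‖u₁ - u₂‖ ≤
      min (2 * |α₂ - α₁| / (α₂ + α₁)) (Real.sqrt (|α₂ - α₁| / (α₂ + α₁))) *
        Real.sqrt (∫ x, (g x - meanG Ω g) ^ 2 ∂(μΩ Ω)) :=
  stmt5_general Ω hΩb g α₁ α₂ hα₁ hα₂ u₁ u₂ hu₁ hu₂
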